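/- Let T be a triangulated category, let X be a triangulated subcategory of T, and set F = X * X^⊥, G = (^⊥X) * X, and U = F ∩ G. Then ((^⊥X) ∩ F, X) is a stable t-structure in U. -/

import Mathlib

/-!
Both `X^⊥` and `^⊥X` are triangulated. If `A`, `B` are triangulated with `Hom(A, B) = 0`, then
`A * B` is triangulated: a triangle `b ⟶ e ⟶ a ⟶ b⟦1⟧` splits, so `B * A ⊆ A * B`, and by the
octahedral axiom `(A * B) * (A * B) = A * (B * A) * B ⊆ (A * A) * (B * B) ⊆ A * B`.
Hence `F`, `G` and `U = F ∩ G` are triangulated and contain `X` and `^⊥X ∩ F`. Conversely, for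
`u ∈ U` a triangle `l ⟶ u ⟶ x ⟶ l⟦1⟧` with `l ∈ ^⊥X`, `x ∈ X` exhibits `l` as an extension of
`u ∈ F` by `x⟦-1⟧ ∈ X ⊆ F`, so `l ∈ ^⊥X ∩ F`.
-/

namespace Paper

open CategoryTheory Limits Triangulated Pretriangulated ZeroObject

universe w v u

variable {C : Type u} [Category.{v} C] [HasZeroObject C] [Preadditive C] [HasShift C ℤ]
  [∀ n : ℤ, (shiftFunctor C n).Additive] [Pretriangulated C]

/-- The subcategory of extensions `X * Y`: objects `e` admitting a distinguished triangle
`x ⟶ e ⟶ y ⟶ x⟦1⟧` with `x ∈ X` and `y ∈ Y`. -/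
def star (X Y : Set C) : Set C :=
  {e | ∃ (x y : C) (_ : x ∈ X) (_ : y ∈ Y) (f : x ⟶ e) (g : e ⟶ y) (h : y ⟶ x⟦(1 : ℤ)⟧),
    Triangle.mk f g h ∈ distTriang C}

/-- A (strictly full) triangulated subcategory: a class of objects containing `0`, closed
under isomorphisms, suspension, desuspension and extensions. -/
structure IsTriangulatedSubcat (S : Set C) : Prop where
  zero_mem : (0 : C) ∈ S
  mem_of_iso : ∀ {a b : C}, (a ≅ b) → a ∈ S → b ∈ S
  shift_mem : ∀ {a : C}, a ∈ S → a⟦(1 : ℤ)⟧ ∈ S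
  unshift_mem : ∀ {a : C}, a ∈ S → a⟦(-1 : ℤ)⟧ ∈ S
  ext₂ : ∀ {a e b : C} (f : a ⟶ e) (g : e ⟶ b) (h : b ⟶ a⟦(1 : ℤ)⟧),
    (Triangle.mk f g h ∈ distTriang C) → a ∈ S → b ∈ S → e ∈ S

/-- A thick subcategory: a triangulated subcategory closed under direct summands
(equivalently, retracts). -/
structure IsThickSubcat (S : Set C) extends IsTriangulatedSubcat S : Prop where
  mem_of_retract : ∀ {a s : C}, s ∈ S → (∃ (i : a ⟶ s) (p : s ⟶ a), i ≫ p = 𝟙 a) → a ∈ S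

/-- `(U, V)` is a stable t-structure in the (triangulated sub)category whose class of
objects is `S`: both are triangulated subcategories contained in `S`, `Hom(U, V) = 0`
and `U * V = S`. -/
structure IsStableTStructureIn (S U V : Set C) : Prop where
  subsetU : U ⊆ S
  subsetV : V ⊆ S
  triU : IsTriangulatedSubcat U
  triV : IsTriangulatedSubcat V
  hom_zero : ∀ {u v : C}, u ∈ U → v ∈ V → ∀ f : u ⟶ v, f = 0
  star_eq : star U V = S

lemma IsTriangulatedSubcat.shift_all {S : Set C} (hS : IsTriangulatedSubcat S) (a : C) (n : ℤ)
    (ha : a ∈ S) : a⟦n⟧ ∈ S := by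
  induction n using Int.induction_on with
  | zero => exact hS.mem_of_iso ((shiftFunctorZero C ℤ).app a).symm ha
  | succ i hi =>
      exact hS.mem_of_iso ((shiftFunctorAdd' C (i : ℤ) 1 ((i : ℤ) + 1) rfl).app a).symm
        (hS.shift_mem hi)
  | pred i hi =>
      exact hS.mem_of_iso
        ((shiftFunctorAdd' C (-(i : ℤ)) (-1) (-(i : ℤ) - 1) (by ring)).app a).symm
        (hS.unshift_mem hi)

/-- The Mathlib `Triangulated.Subcategory` associated to a class of objects satisfying
`IsTriangulatedSubcat`. -/
def IsTriangulatedSubcat.toSubcategory {S : Set C} (hS : IsTriangulatedSubcat S) :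
    ObjectProperty C :=
  fun a => a ∈ S

lemma IsTriangulatedSubcat.inter {X Y : Set C} (hX : IsTriangulatedSubcat X)
    (hY : IsTriangulatedSubcat Y) : IsTriangulatedSubcat (X ∩ Y) where
  zero_mem := ⟨hX.zero_mem, hY.zero_mem⟩
  mem_of_iso := fun e h => ⟨hX.mem_of_iso e h.1, hY.mem_of_iso e h.2⟩
  shift_mem := fun h => ⟨hX.shift_mem h.1, hY.shift_mem h.2⟩
  unshift_mem := fun h => ⟨hX.unshift_mem h.1, hY.unshift_mem h.2⟩
  ext₂ := fun f g h hT ha hb => ⟨hX.ext₂ f g h hT ha.1 hb.1, hY.ext₂ f g h hT ha.2 hb.2⟩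

/-- The Verdier quotient of `C` by the triangulated subcategory `S`. -/
abbrev VerdierQuotient {S : Set C} (hS : IsTriangulatedSubcat S) : Type _ :=
  hS.toSubcategory.trW.Localization

/-- The Verdier quotient functor. -/
noncomputable abbrev Vq {S : Set C} (hS : IsTriangulatedSubcat S) : C ⥤ VerdierQuotient hS :=
  hS.toSubcategory.trW.Q

/-- The essential image of a class of objects under a functor (the closure under
isomorphisms of the image). -/
def QSet {D : Type*} [Category D] (L : C ⥤ D) (S : Set C) : Set D :=
  {d | ∃ s ∈ S, Nonempty (L.obj s ≅ d)}

/-- The right perpendicular class `X^⊥`. -/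
def rightPerp (X : Set C) : Set C := {t | ∀ {x : C}, x ∈ X → ∀ f : x ⟶ t, f = 0}

/-- The left perpendicular class `^⊥X`. -/
def leftPerp (X : Set C) : Set C := {t | ∀ {x : C}, x ∈ X → ∀ f : t ⟶ x, f = 0}

namespace IsTriangulatedSubcat

variable {S : Set C}

lemma isClosedUnderIsomorphisms (hS : IsTriangulatedSubcat S) :
    ObjectProperty.IsClosedUnderIsomorphisms (· ∈ S) :=
  ⟨hS.mem_of_iso⟩

lemma isTriangulated (hS : IsTriangulatedSubcat S) : ObjectProperty.IsTriangulated (· ∈ S) where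
  exists_zero := ⟨0, isZero_zero C, hS.zero_mem⟩
  isStableUnderShiftBy n := ⟨fun a ha => hS.shift_all a n ha⟩
  ext₂' T hT h₁ h₃ := ObjectProperty.le_isoClosure _ _ (hS.ext₂ T.mor₁ T.mor₂ T.mor₃ hT h₁ h₃)

end IsTriangulatedSubcat

open ObjectProperty

lemma isTriangulatedSubcat_ofPred (P : ObjectProperty C) [P.IsTriangulated]
    [P.IsClosedUnderIsomorphisms] : IsTriangulatedSubcat (Set.ofPred P) where
  zero_mem := P.prop_zero
  mem_of_iso e h := P.prop_of_iso e h
  shift_mem h := P.le_shift 1 _ h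
  unshift_mem h := P.le_shift (-1) _ h
  ext₂ _ _ _ hT h₁ h₃ := P.ext_of_isTriangulatedClosed₂ _ hT h₁ h₃

lemma star_eq_ofPred_extensionProduct (A B : Set C) :
    star A B = Set.ofPred (extensionProduct (· ∈ A) (· ∈ B)) := by
  ext e
  constructor
  · rintro ⟨a, b, ha, hb, f, g, h, hT⟩
    exact ⟨a, b, f, g, h, hT, ha, hb⟩
  · rintro ⟨a, b, f, g, h, hT, ha, hb⟩
    exact ⟨a, b, ha, hb, f, g, h, hT⟩

lemma isTriangulatedSubcat_rightPerp {X : Set C} (hX : IsTriangulatedSubcat X) :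
    IsTriangulatedSubcat (rightPerp X) := by
  have := hX.isTriangulated
  have hperp : rightPerp X = Set.ofPred (rightOrthogonal (· ∈ X)) :=
    Set.ext fun _ => ⟨fun ht _ f hx => ht hx f, fun ht _ hx f => ht f hx⟩
  rw [hperp]
  exact isTriangulatedSubcat_ofPred _

lemma isTriangulatedSubcat_leftPerp {X : Set C} (hX : IsTriangulatedSubcat X) :
    IsTriangulatedSubcat (leftPerp X) := by
  have := hX.isTriangulated
  have hperp : leftPerp X = Set.ofPred (leftOrthogonal (· ∈ X)) :=
    Set.ext fun _ => ⟨fun ht _ f hx => ht hx f, fun ht _ hx f => ht f hx⟩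
  rw [hperp]
  exact isTriangulatedSubcat_ofPred _

lemma subset_star_left {A B : Set C} (hB : (0 : C) ∈ B) : A ⊆ star A B := by
  have : ContainsZero (· ∈ B) := ⟨0, isZero_zero C, hB⟩
  rw [star_eq_ofPred_extensionProduct]
  exact le_extensionProduct_left _

lemma subset_star_right {A B : Set C} (hA : (0 : C) ∈ A) : B ⊆ star A B := by
  have : ContainsZero (· ∈ A) := ⟨0, isZero_zero C, hA⟩
  rw [star_eq_ofPred_extensionProduct]
  exact le_extensionProduct_right _

lemma star_subset {A B S : Set C} (hS : IsTriangulatedSubcat S) (hA : A ⊆ S) (hB : B ⊆ S) :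
    star A B ⊆ S := by
  rintro e ⟨a, b, ha, hb, f, g, h, hT⟩
  exact hS.ext₂ f g h hT (hA ha) (hB hb)

lemma star_inter_subset {A B S : Set C} (hS : IsTriangulatedSubcat S) (hB : B ⊆ S) :
    star A B ∩ S ⊆ star (A ∩ S) B := by
  rintro e ⟨⟨a, b, ha, hb, f, g, h, hT⟩, he⟩
  have hT' := inv_rot_of_distTriang _ hT
  exact ⟨a, b, ⟨ha, hS.ext₂ _ _ _ hT' (hS.unshift_mem (hB hb)) he⟩, hb, f, g, h, hT⟩

lemma extensionProduct_swap_le {P Q : ObjectProperty C}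
    (hPQ : ∀ ⦃p q : C⦄, P p → Q q → ∀ f : p ⟶ q⟦(1 : ℤ)⟧, f = 0) :
    extensionProduct Q P ≤ extensionProduct P Q := by
  rintro e ⟨q, p, f, g, h, hT, hq, hp⟩
  obtain ⟨i, -, -⟩ := exists_iso_binaryBiproduct_of_distTriang _ hT (hPQ hp hq h)
  exact (extensionProduct P Q).prop_of_iso (i ≪≫ biprod.braiding q p).symm
    ⟨p, q, _, _, _, binaryBiproductTriangle_distinguished p q, hp, hq⟩

variable [IsTriangulated C]

lemma isTriangulated_extensionProduct {P Q : ObjectProperty C} [P.IsTriangulated]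
    [Q.IsTriangulated] [P.IsClosedUnderIsomorphisms] [Q.IsClosedUnderIsomorphisms]
    (hPQ : P ≤ Q.leftOrthogonal) : (extensionProduct P Q).IsTriangulated := by
  have hswap : extensionProduct Q P ≤ extensionProduct P Q :=
    extensionProduct_swap_le fun p q hp hq f => hPQ p hp f (Q.le_shift 1 q hq)
  have hext : extensionProduct (extensionProduct P Q) (extensionProduct P Q) ≤
      extensionProduct P Q :=
    calc extensionProduct (extensionProduct P Q) (extensionProduct P Q)
        = extensionProduct P (extensionProduct (extensionProduct Q P) Q) := by
          rw [extensionProduct_assoc, extensionProduct_assoc]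
      _ ≤ extensionProduct P (extensionProduct (extensionProduct P Q) Q) :=
          monotone_extensionProduct_right _ (monotone_extensionProduct_left _ hswap)
      _ = extensionProduct (extensionProduct P P) (extensionProduct Q Q) := by
          rw [extensionProduct_assoc, extensionProduct_assoc]
      _ ≤ extensionProduct P Q :=
          (monotone_extensionProduct_left _ (extensionProduct_le_of_isTriangulatedClosed₂
            le_rfl le_rfl)).trans (monotone_extensionProduct_right _
              (extensionProduct_le_of_isTriangulatedClosed₂ le_rfl le_rfl))
  have : (extensionProduct P Q).ContainsZero :=
    ⟨0, isZero_zero C, le_extensionProduct_left _ _ P.prop_zero⟩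
  exact { ext₂' := fun T hT h₁ h₃ => le_isoClosure _ _ (hext _ ⟨_, _, _, _, _, hT, h₁, h₃⟩) }

lemma isTriangulatedSubcat_star {A B : Set C} (hA : IsTriangulatedSubcat A)
    (hB : IsTriangulatedSubcat B) (hAB : ∀ ⦃a b : C⦄, a ∈ A → b ∈ B → ∀ f : a ⟶ b, f = 0) :
    IsTriangulatedSubcat (star A B) := by
  have := hA.isTriangulated
  have := hB.isTriangulated
  have := hA.isClosedUnderIsomorphisms
  have := hB.isClosedUnderIsomorphisms
  have := isTriangulated_extensionProduct fun a ha b f hb => hAB ha hb f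
  rw [star_eq_ofPred_extensionProduct]
  exact isTriangulatedSubcat_ofPred _

/-- Let `X` be a triangulated subcategory of `C` and set `F = X * X^⊥`, `G = (^⊥X) * X`
and `U = F ∩ G`.  Then `((^⊥X) ∩ F, X)` is a stable t-structure in `U`. -/
theorem statement15 {X : Set C} (hX : IsTriangulatedSubcat X) :
    IsStableTStructureIn (star X (rightPerp X) ∩ star (leftPerp X) X)
      (leftPerp X ∩ star X (rightPerp X)) X := by
  have hR := isTriangulatedSubcat_rightPerp hX
  have hL := isTriangulatedSubcat_leftPerp hX
  have hF : IsTriangulatedSubcat (star X (rightPerp X)) :=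
    isTriangulatedSubcat_star hX hR fun _ _ hx ht f => ht hx f
  have hG : IsTriangulatedSubcat (star (leftPerp X) X) :=
    isTriangulatedSubcat_star hL hX fun _ _ ht hx f => ht hx f
  have hXF : X ⊆ star X (rightPerp X) := subset_star_left hR.zero_mem
  have hU : leftPerp X ∩ star X (rightPerp X) ⊆ star X (rightPerp X) ∩ star (leftPerp X) X :=
    fun _ hp => ⟨hp.2, subset_star_left hX.zero_mem hp.1⟩
  have hV : X ⊆ star X (rightPerp X) ∩ star (leftPerp X) X :=
    fun _ hx => ⟨hXF hx, subset_star_right (A := leftPerp X) hL.zero_mem hx⟩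
  refine ⟨hU, hV, hL.inter hF, hX, fun hu hv f => hu.1 hv f, ?_⟩
  refine (star_subset (hF.inter hG) hU hV).antisymm ?_
  rw [Set.inter_comm]
  exact star_inter_subset hF hXF

end Paper
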